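/- arXiv:2212.06208 — 4 statements merged into one kernel-verified Lean document; each statement's English description precedes it below -/
import Mathlib

section
/- For every positive integer n not divisible by 3, the congruence n·τ(n) ≡ σ(n) (mod 3) holds in ℤ. -/
/-- The topology of coefficientwise convergence on `PowerSeries ℤ`
(the product topology, `ℤ` carrying its usual (discrete) topology). -/
noncomputable instance : TopologicalSpace (PowerSeries ℤ) :=
  inferInstanceAs (TopologicalSpace ((Unit →₀ ℕ) → ℤ))

/-- The `q`-expansion of the discriminant modular form:
`Δ = q · ∏_{k=1}^∞ (1 - q^k)^24` in `ℤ⟦q⟧`. -/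
noncomputable def Δ : PowerSeries ℤ :=
  PowerSeries.X * ∏' k : ℕ, (1 - PowerSeries.X ^ (k + 1)) ^ 24

/-- The Ramanujan tau function: the coefficient of `q^n` in `Δ`. -/
noncomputable def ramanujanTau (n : ℕ) : ℤ :=
  PowerSeries.coeff n Δ

/-!
Write `E = ∏_{k ≥ 1} (1 - q^k)`, so that `Δ = q E^24`, and `θ = q d/dq`. Modulo 3 the Frobenius
gives `Δ E^3 = q E^27 = q (E^3)(q^9)`. By Jacobi's identity `E^3 = ∑ (-1)^k (2k+1) q^{k(k+1)/2}`,
obtained as the limit of a finite `q`-binomial identity proved by the Wilf–Zeilberger method.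
On the other hand `θE = -S E` with `S = ∑ σ(n) q^n`, hence `θ²(E^3) = 3 (3 S² E^3 - θS · E^3)`.
Since `T_{3r+1} = 9 T_r + 1` and `3 ∣ T_k` otherwise, reading off the coefficients of Jacobi's
series shows `θ²(E^3) / 3 ≡ -q (E^3)(q^9)`, so `θS · E^3 ≡ Δ E^3` and `Δ ≡ θS`, that is
`τ(n) ≡ n σ(n) (mod 3)`.
-/

open PowerSeries Finset Ring

def triangle : ℕ → ℕ
  | 0 => 0
  | k + 1 => triangle k + (k + 1)

theorem le_triangle (k : ℕ) : k ≤ triangle k := by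
  induction k with
  | zero => rfl
  | succ k ih => simp only [triangle]; omega

theorem triangle_injective : Function.Injective triangle :=
  (strictMono_nat_of_lt_succ fun k => by simp only [triangle]; omega).injective

theorem two_mul_triangle (k : ℕ) : 2 * triangle k = k * (k + 1) := by
  induction k with
  | zero => rfl
  | succ k ih => simp only [triangle]; grind

theorem triangle_three_mul_add_one (r : ℕ) : triangle (3 * r + 1) = 9 * triangle r + 1 := by
  have h := two_mul_triangle (3 * r + 1)
  have := two_mul_triangle r
  grind

theorem three_dvd_triangle {k : ℕ} (hk : k % 3 ≠ 1) : 3 ∣ triangle k := by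
  have h := two_mul_triangle k
  have : 3 ∣ k * (k + 1) := by
    rcases (by omega : 3 ∣ k ∨ 3 ∣ k + 1) with h3 | h3
    exacts [h3.mul_right _, h3.mul_left _]
  omega

def jacobiCoeff (i : ℕ) : ℤ :=
  ∑ k ∈ range (i + 1), if i = triangle k then (-1) ^ k * (2 * k + 1) else 0

theorem jacobiCoeff_triangle (k : ℕ) : jacobiCoeff (triangle k) = (-1) ^ k * (2 * k + 1) := by
  rw [jacobiCoeff, sum_eq_single_of_mem k (mem_range.mpr (Nat.lt_succ_of_le (le_triangle k)))
    fun j _ hj => if_neg (triangle_injective.ne hj).symm, if_pos rfl]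

theorem jacobiCoeff_eq_zero {i : ℕ} (h : ∀ k, triangle k ≠ i) : jacobiCoeff i = 0 :=
  sum_eq_zero fun k _ => if_neg (h k).symm

theorem SModEq.one_of_mul_eq_one {A : Type*} [CommRing A] {I : Ideal A} {u v : A}
    (huv : u * v = 1) (hu : u ≡ 1 [SMOD I]) : v ≡ 1 [SMOD I] :=
  calc v = 1 * v := (one_mul v).symm
    _ ≡ u * v [SMOD I] := hu.symm.mul SModEq.rfl
    _ = 1 := huv

namespace PowerSeries

variable {R : Type*} [CommRing R]

theorem smodEq_X_pow_iff {m : ℕ} {f g : R⟦X⟧} :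
    f ≡ g [SMOD Ideal.span {X ^ m}] ↔ ∀ i < m, coeff i f = coeff i g := by
  simp only [SModEq.sub_mem, Ideal.mem_span_singleton, X_pow_dvd_iff, map_sub, sub_eq_zero]

theorem eq_of_forall_smodEq {f g : R⟦X⟧} (h : ∀ n, f ≡ g [SMOD Ideal.span {X ^ (n + 1)}]) :
    f = g :=
  ext fun n => smodEq_X_pow_iff.mp (h n) n n.lt_succ_self

theorem X_pow_mul_smodEq {a m : ℕ} {f g : R⟦X⟧} (h : f ≡ g [SMOD Ideal.span {X ^ m}]) :
    X ^ a * f ≡ X ^ a * g [SMOD Ideal.span {X ^ (a + m)}] := by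
  rw [SModEq.sub_mem, Ideal.mem_span_singleton, ← mul_sub, pow_add] at *
  exact mul_dvd_mul_left _ h

theorem prod_one_sub_X_pow_smodEq_one {ι : Type*} {s : Finset ι} {e : ι → ℕ} {m : ℕ}
    (h : ∀ j ∈ s, m ≤ e j) : ∏ j ∈ s, (1 - X ^ e j) ≡ 1 [SMOD Ideal.span {(X : R⟦X⟧) ^ m}] := by
  simpa using SModEq.prod (I := Ideal.span {(X : R⟦X⟧) ^ m}) (s := s)
      (x := fun j => 1 - X ^ e j) (y := fun _ => 1) fun j hj => by
    rw [SModEq.sub_mem, Ideal.mem_span_singleton, sub_sub_cancel_left, dvd_neg]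
    exact pow_dvd_pow X (h j hj)

end PowerSeries

section QPochhammer

variable {A : Type*} [CommRing A]

def qPochhammer (q : A) (n : ℕ) : A := ∏ j ∈ range n, (1 - q ^ (j + 1))

theorem qPochhammer_zero (q : A) : qPochhammer q 0 = 1 := prod_range_zero _

theorem qPochhammer_succ (q : A) (n : ℕ) :
    qPochhammer q (n + 1) = qPochhammer q n * (1 - q ^ (n + 1)) := prod_range_succ _ _

theorem qPochhammer_add (q : A) (a b : ℕ) :
    qPochhammer q (a + b) = qPochhammer q a * ∏ j ∈ range b, (1 - q ^ (a + j + 1)) :=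
  prod_range_add _ _ _

theorem map_qPochhammer {B : Type*} [CommRing B] (f : A →+* B) (q : A) (n : ℕ) :
    f (qPochhammer q n) = qPochhammer (f q) n := by
  simp [qPochhammer]

end QPochhammer

section FiniteJacobi

variable {K : Type*} [Field K] (q : K)

/-- `(-1)ᵏ (2k+1) q^{k(k+1)/2}` times the Gaussian binomial `[2n+1, n-k]_q`. -/
noncomputable def jacobiTerm (n k : ℕ) : K :=
  (-1) ^ k * (2 * k + 1) * q ^ triangle k *
    (qPochhammer q (2 * n + 1) / (qPochhammer q (n - k) * qPochhammer q (n + k + 1)))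

/-- The Wilf–Zeilberger certificate of `sum_range_jacobiTerm`. -/
noncomputable def jacobiCert (n k : ℕ) : K :=
  (-1) ^ (k + 1) * q ^ (triangle k + (n + 1 - k)) *
    (qPochhammer q (2 * n + 1) / (qPochhammer q (n + 1 - k) * qPochhammer q (n + k))) *
    (2 * k + 1 + (2 * k - 1) * q ^ k * (1 - q ^ (n + 1 - k)) / (1 - q ^ (n + k + 1)))

variable {q} (hq : ∀ m, 1 - q ^ (m + 1) ≠ 0)
include hq

theorem qPochhammer_ne_zero (n : ℕ) : qPochhammer q n ≠ 0 :=
  prod_ne_zero_iff.mpr fun j _ => hq j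

theorem jacobiTerm_succ_sub {n k : ℕ} (hk : k ≤ n) :
    jacobiTerm q (n + 1) k - (1 - q ^ (n + 1)) ^ 2 * jacobiTerm q n k =
      jacobiCert q n (k + 1) - jacobiCert q n k := by
  obtain ⟨d, rfl⟩ := Nat.exists_eq_add_of_le hk
  have e1 : 2 * (k + d + 1) + 1 = 2 * k + 2 * d + 1 + 1 + 1 := by ring
  have e2 : k + d + 1 - k = d + 1 := by omega
  have e3 : k + d + 1 + k + 1 = 2 * k + d + 1 + 1 := by ring
  have e4 : k + d - k = d := by omega
  have e5 : k + d + 1 - (k + 1) = d := by omega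
  have e6 : k + d + (k + 1) = 2 * k + d + 1 := by ring
  have e7 : k + d + k = 2 * k + d := by ring
  have e8 : 2 * (k + d) + 1 = 2 * k + 2 * d + 1 := by ring
  simp only [jacobiTerm, jacobiCert, e1, e2, e3, e4, e5, e6, e7, e8, qPochhammer_succ, triangle]
  have := qPochhammer_ne_zero hq d
  have := qPochhammer_ne_zero hq (2 * k + d)
  have := qPochhammer_ne_zero hq (2 * k + 2 * d)
  have := hq d
  have := hq (2 * k + d)
  have := hq (2 * k + d + 1)
  have := hq (2 * k + 2 * d)
  have := hq (2 * k + 2 * d + 1)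
  have := hq (2 * k + 2 * d + 1 + 1)
  have := hq (k + d)
  field_simp
  push_cast
  ring

theorem jacobiCert_zero (n : ℕ) : jacobiCert q n 0 = 0 := by
  have := hq n
  simp only [jacobiCert]
  field_simp
  push_cast
  ring

theorem jacobiCert_self_add_one (n : ℕ) :
    jacobiCert q n (n + 1) = -jacobiTerm q (n + 1) (n + 1) := by
  have e1 : n + (n + 1) = 2 * n + 1 := by ring
  have e2 : n + 1 + (n + 1) + 1 = 2 * (n + 1) + 1 := by ring
  have := qPochhammer_ne_zero hq (2 * n + 1)
  have := qPochhammer_ne_zero hq (2 * (n + 1) + 1)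
  simp only [jacobiCert, jacobiTerm, Nat.sub_self, e1, e2, qPochhammer_zero, pow_zero, sub_self]
  field_simp
  ring

theorem sum_range_jacobiTerm (n : ℕ) :
    ∑ k ∈ range (n + 1), jacobiTerm q n k = qPochhammer q n ^ 2 := by
  induction n with
  | zero =>
    simpa [jacobiTerm, qPochhammer_succ, qPochhammer_zero, triangle] using hq 0
  | succ n ih =>
    have telescope : ∑ k ∈ range (n + 1),
        (jacobiTerm q (n + 1) k - (1 - q ^ (n + 1)) ^ 2 * jacobiTerm q n k) =
          jacobiCert q n (n + 1) - jacobiCert q n 0 := by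
      rw [← sum_range_sub]
      exact sum_congr rfl fun k hk => jacobiTerm_succ_sub hq (Nat.lt_succ_iff.mp (mem_range.mp hk))
    rw [sum_sub_distrib, ← mul_sum, ih, jacobiCert_self_add_one hq, jacobiCert_zero hq] at telescope
    rw [sum_range_succ, qPochhammer_succ]
    linear_combination telescope

end FiniteJacobi

theorem map_ringInverse {M₀ G₀ F : Type*} [MonoidWithZero M₀] [DivisionMonoid G₀] [FunLike F M₀ G₀]
    [MonoidHomClass F M₀ G₀] (f : F) {a : M₀} (ha : IsUnit a) : f a⁻¹ʳ = (f a)⁻¹ :=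
  eq_inv_of_mul_eq_one_right (by rw [← map_mul, Ring.mul_inverse_cancel a ha, map_one])

section JacobiPowerSeries

variable {R : Type*} [CommRing R]

theorem isUnit_qPochhammer_X (n : ℕ) : IsUnit (qPochhammer (X : R⟦X⟧) n) := by
  rw [isUnit_iff_constantCoeff, map_qPochhammer, constantCoeff_X]
  simp [qPochhammer]

theorem qPochhammer_X_smodEq {n N : ℕ} (h : n ≤ N) :
    qPochhammer (X : R⟦X⟧) N ≡ qPochhammer X n [SMOD Ideal.span {X ^ (n + 1)}] := by
  obtain ⟨b, rfl⟩ := Nat.exists_eq_add_of_le h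
  rw [qPochhammer_add]
  conv_rhs => rw [← mul_one (qPochhammer X n)]
  exact SModEq.rfl.mul (prod_one_sub_X_pow_smodEq_one fun j _ => by omega)

/-- Both `(q;q)_{2n+1} / (q;q)_{n-k}` and `(q;q)_{n+k+1} / (q;q)_n` are products of factors
`1 - X^j` with `j > n - k`. -/
theorem jacobiRatio_smodEq_one {n k : ℕ} (hk : k ≤ n) :
    qPochhammer (X : R⟦X⟧) (2 * n + 1) * qPochhammer X n *
        (qPochhammer X (n - k) * qPochhammer X (n + k + 1))⁻¹ʳ ≡ 1
      [SMOD Ideal.span {X ^ (n - k + 1)}] := by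
  have hab := (isUnit_qPochhammer_X (R := R) (n - k)).mul (isUnit_qPochhammer_X n)
  have hB := isUnit_qPochhammer_X (R := R) (n + k + 1)
  have hA : qPochhammer (X : R⟦X⟧) (2 * n + 1) =
      qPochhammer X (n - k) * ∏ j ∈ range (n + k + 1), (1 - X ^ (n - k + j + 1)) := by
    rw [← qPochhammer_add]; congr 1; omega
  have hC : qPochhammer (X : R⟦X⟧) (n + k + 1) =
      qPochhammer X n * ∏ j ∈ range (k + 1), (1 - X ^ (n + j + 1)) := qPochhammer_add X n (k + 1)
  rw [hC] at hB
  rw [hA, hC]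
  generalize qPochhammer (X : R⟦X⟧) (n - k) = a at *
  generalize qPochhammer (X : R⟦X⟧) n = b at *
  have hA := prod_one_sub_X_pow_smodEq_one (R := R) (m := n - k + 1)
    (s := range (n + k + 1)) (e := fun j => n - k + j + 1) fun j _ => by omega
  have hB' := prod_one_sub_X_pow_smodEq_one (R := R) (m := n + 1)
    (s := range (k + 1)) (e := fun j => n + j + 1) fun j _ => by omega
  generalize ∏ j ∈ range (n + k + 1), (1 - (X : R⟦X⟧) ^ (n - k + j + 1)) = A at *
  generalize ∏ j ∈ range (k + 1), (1 - (X : R⟦X⟧) ^ (n + j + 1)) = B at *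
  have hratio : a * A * b * (a * (b * B))⁻¹ʳ = A * B⁻¹ʳ :=
    calc a * A * b * (a * (b * B))⁻¹ʳ = A * B⁻¹ʳ * (a * b * (a * b)⁻¹ʳ) := by
          rw [← mul_assoc a b B, mul_inverse_rev]; ring
      _ = A * B⁻¹ʳ := by rw [mul_inverse_cancel _ hab, mul_one]
  have hBinv : B⁻¹ʳ ≡ 1 [SMOD Ideal.span {X ^ (n - k + 1)}] :=
    (SModEq.one_of_mul_eq_one (mul_inverse_cancel B (isUnit_of_mul_isUnit_right hB)) hB').mono
      (Ideal.span_singleton_le_span_singleton.mpr (pow_dvd_pow X (by omega)))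
  simpa only [hratio, mul_one] using hA.mul hBinv

end JacobiPowerSeries

theorem qPochhammer_X_pow_three (n : ℕ) :
    qPochhammer (X : ℤ⟦X⟧) n ^ 3 =
      ∑ k ∈ range (n + 1), C ((-1) ^ k * (2 * k + 1) : ℤ) * X ^ triangle k *
        (qPochhammer X (2 * n + 1) * qPochhammer X n *
          (qPochhammer X (n - k) * qPochhammer X (n + k + 1))⁻¹ʳ) := by
  -- transfer `sum_range_jacobiTerm` through the fraction field of `ℤ⟦X⟧`
  have hq (m : ℕ) : 1 - algebraMap ℤ⟦X⟧ (FractionRing ℤ⟦X⟧) X ^ (m + 1) ≠ 0 := by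
    rw [← map_pow, ← map_one (algebraMap ℤ⟦X⟧ _), ← map_sub,
      map_ne_zero_iff _ (IsFractionRing.injective _ _)]
    intro h
    simpa using congrArg constantCoeff h
  apply IsFractionRing.injective ℤ⟦X⟧ (FractionRing ℤ⟦X⟧)
  rw [pow_succ, map_mul, map_pow, map_qPochhammer, ← sum_range_jacobiTerm hq, sum_mul, map_sum]
  refine sum_congr rfl fun k _ => ?_
  have hu := (isUnit_qPochhammer_X (R := ℤ) (n - k)).mul (isUnit_qPochhammer_X (n + k + 1))
  simp [jacobiTerm, map_qPochhammer, div_eq_mul_inv, map_ofNat,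
    map_ringInverse (algebraMap ℤ⟦X⟧ (FractionRing ℤ⟦X⟧)) hu]
  ring

theorem qPochhammer_X_pow_three_smodEq (n : ℕ) :
    qPochhammer (X : ℤ⟦X⟧) n ^ 3 ≡
      ∑ k ∈ range (n + 1), C ((-1) ^ k * (2 * k + 1) : ℤ) * X ^ triangle k
      [SMOD Ideal.span {X ^ (n + 1)}] := by
  rw [qPochhammer_X_pow_three]
  refine SModEq.sum fun k hk => ?_
  have hk : k ≤ n := Nat.lt_succ_iff.mp (mem_range.mp hk)
  have h := (X_pow_mul_smodEq (a := triangle k) (jacobiRatio_smodEq_one (R := ℤ) hk)).mono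
    (Ideal.span_singleton_le_span_singleton.mpr
      (pow_dvd_pow X (by have := le_triangle k; omega : n + 1 ≤ triangle k + (n - k + 1))))
  rw [mul_one] at h
  rw [mul_assoc]
  exact SModEq.rfl.mul h

theorem coeff_sum_range_jacobi (n : ℕ) :
    coeff n (∑ k ∈ range (n + 1), C ((-1) ^ k * (2 * k + 1) : ℤ) * X ^ triangle k) =
      jacobiCoeff n := by
  simp only [map_sum, coeff_C_mul_X_pow, jacobiCoeff]

instance : T2Space ℤ⟦X⟧ := WithPiTopology.instT2Space ℤ

instance : IsTopologicalSemiring ℤ⟦X⟧ := WithPiTopology.instIsTopologicalSemiring ℤ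

theorem multipliable_one_sub_X_pow : Multipliable fun k : ℕ => (1 : ℤ⟦X⟧) - X ^ (k + 1) :=
  WithPiTopology.multipliable_one_sub_X_pow ℤ

noncomputable def euler : ℤ⟦X⟧ := ∏' k : ℕ, (1 - X ^ (k + 1))

theorem delta_eq_X_mul_euler_pow : Δ = X * euler ^ 24 := by
  rw [Δ, multipliable_one_sub_X_pow.tprod_pow, euler]

theorem euler_smodEq_qPochhammer (n : ℕ) :
    euler ≡ qPochhammer X n [SMOD Ideal.span {X ^ (n + 1)}] := by
  refine smodEq_X_pow_iff.mpr fun i hi => tendsto_nhds_unique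
    (((WithPiTopology.continuous_coeff ℤ i).tendsto _).comp
      multipliable_one_sub_X_pow.hasProd.tendsto_prod_nat) (tendsto_const_nhds.congr' ?_)
  filter_upwards [Filter.eventually_ge_atTop n] with N hN
  exact (smodEq_X_pow_iff.mp (qPochhammer_X_smodEq hN) i hi).symm

/-- Jacobi's identity `∏_{k ≥ 1} (1 - q^k)^3 = ∑_{k ≥ 0} (-1)^k (2k+1) q^{k(k+1)/2}`. -/
theorem coeff_euler_pow_three (n : ℕ) : coeff n (euler ^ 3) = jacobiCoeff n := by
  rw [← coeff_sum_range_jacobi]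
  exact smodEq_X_pow_iff.mp
    (((euler_smodEq_qPochhammer n).pow 3).trans (qPochhammer_X_pow_three_smodEq n)) n n.lt_succ_self

namespace PowerSeries

variable (R : Type*) [CommRing R]

noncomputable def theta : Derivation R R⟦X⟧ R⟦X⟧ := (X : R⟦X⟧) • d⁄dX R

variable {R}

theorem coeff_theta (f : R⟦X⟧) (n : ℕ) : coeff n (theta R f) = n * coeff n f := by
  cases n with
  | zero => simp [theta]
  | succ n => simp [theta, coeff_succ_X_mul, coeff_derivative, mul_comm]

theorem map_theta {S : Type*} [CommRing S] (φ : R →+* S) (f : R⟦X⟧) :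
    map φ (theta R f) = theta S (map φ f) := by
  ext n
  simp [coeff_theta]

theorem theta_smodEq {m : ℕ} {f g : R⟦X⟧} (h : f ≡ g [SMOD Ideal.span {X ^ m}]) :
    theta R f ≡ theta R g [SMOD Ideal.span {X ^ m}] := by
  rw [smodEq_X_pow_iff] at *
  intro i hi
  rw [coeff_theta, coeff_theta, h i hi]

theorem coeff_natCast_mul (d n : ℕ) (f : R⟦X⟧) : coeff n ((d : R⟦X⟧) * f) = d * coeff n f := by
  rw [← map_natCast (C : R →+* R⟦X⟧), coeff_C_mul]

theorem theta_X_pow (d : ℕ) : theta R ((X : R⟦X⟧) ^ d) = (d : R⟦X⟧) * X ^ d := by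
  ext n
  rw [coeff_theta, coeff_natCast_mul, coeff_X_pow]
  split_ifs with h <;> simp [h]

theorem one_sub_X_pow_mul_expand_mk_one {d : ℕ} (hd : d ≠ 0) :
    (1 - X ^ d) * expand d hd (mk 1 : R⟦X⟧) = 1 := by
  simpa [mul_comm] using congrArg (expand d hd) (mk_one_mul_one_sub_eq_one R)

theorem pow_prime_pow_eq_expand {p : ℕ} [hp : Fact p.Prime] (n : ℕ) (f : (ZMod p)⟦X⟧) :
    f ^ p ^ n = expand (p ^ n) (pow_ne_zero n hp.out.ne_zero) f := by
  have := MvPowerSeries.map_iterateFrobenius_expand (σ := Unit) p hp.out.ne_zero f n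
  rwa [show iterateFrobenius (ZMod p) p n = RingHom.id _ from RingHom.ext ZMod.pow_card_pow,
    MvPowerSeries.map_id, eq_comm] at this

theorem coeff_X_mul_expand {p : ℕ} (hp : 1 < p) (f : R⟦X⟧) (i : ℕ) :
    coeff i (X * expand p (by omega) f) = if i % p = 1 then coeff (i / p) f else 0 := by
  cases i with
  | zero => simp
  | succ m =>
    rw [coeff_succ_X_mul, coeff_expand]
    by_cases hm : p ∣ m
    · obtain ⟨c, rfl⟩ := hm
      rw [if_pos (dvd_mul_right p c), Nat.mul_add_mod, Nat.mod_eq_of_lt hp, if_pos rfl,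
        Nat.mul_add_div (by omega), Nat.div_eq_of_lt hp, add_zero,
        Nat.mul_div_cancel_left _ (by omega)]
    · rw [if_neg hm, if_neg]
      intro h
      have h' : m + 1 ≡ 0 + 1 [MOD p] := h.trans (Nat.mod_eq_of_lt hp).symm
      exact hm ((Nat.modEq_zero_iff_dvd).mp (Nat.ModEq.add_right_cancel' 1 h'))

end PowerSeries

noncomputable def sigmaSeries : ℤ⟦X⟧ := mk fun n => ArithmeticFunction.sigma 1 n

/-- `∑_{d ≤ N} d q^d / (1 - q^d)`, with `expand d (mk 1) = 1 / (1 - q^d)`. -/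
noncomputable def sigmaPartial (N : ℕ) : ℤ⟦X⟧ :=
  ∑ k ∈ range N, ((k + 1 : ℕ) : ℤ⟦X⟧) * (expand (k + 1) k.succ_ne_zero (mk 1) - 1)

theorem sigmaPartial_succ (N : ℕ) : sigmaPartial (N + 1) =
    sigmaPartial N + ((N + 1 : ℕ) : ℤ⟦X⟧) * (expand (N + 1) N.succ_ne_zero (mk 1) - 1) :=
  sum_range_succ _ _

theorem theta_qPochhammer_X (N : ℕ) :
    theta ℤ (qPochhammer X N) = -(sigmaPartial N * qPochhammer X N) := by
  induction N with
  | zero => simp [qPochhammer_zero, sigmaPartial]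
  | succ N ih =>
    rw [qPochhammer_succ, Derivation.leibniz, ih, map_sub, Derivation.map_one_eq_zero, theta_X_pow,
      sigmaPartial_succ, smul_eq_mul, smul_eq_mul]
    linear_combination ((N + 1 : ℕ) : ℤ⟦X⟧) * qPochhammer X N *
      one_sub_X_pow_mul_expand_mk_one (R := ℤ) (d := N + 1) N.succ_ne_zero

theorem sum_range_ite_succ_dvd_eq_sigma {i N : ℕ} (hi : 0 < i) (hiN : i ≤ N) :
    ∑ k ∈ range N, (if k + 1 ∣ i then k + 1 else 0) = ArithmeticFunction.sigma 1 i := by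
  rw [ArithmeticFunction.sigma_one_apply, ← Nat.filter_dvd_eq_divisors hi.ne', sum_filter]
  have h := sum_range_succ' (fun d => if d ∣ i then d else 0) N
  simp only [Nat.zero_dvd, hi.ne', if_false, add_zero] at h
  rw [← h]
  refine (sum_subset (range_subset_range.mpr (by omega)) fun d _ hd => if_neg fun hdi => hd ?_).symm
  exact mem_range.mpr (Nat.lt_succ_of_le (Nat.le_of_dvd hi hdi))

theorem coeff_sigmaPartial {i N : ℕ} (hiN : i ≤ N) :
    coeff i (sigmaPartial N) = ArithmeticFunction.sigma 1 i := by
  rcases Nat.eq_zero_or_pos i with rfl | hi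
  · simp [sigmaPartial]
  · simp only [sigmaPartial, map_sum, coeff_natCast_mul, map_sub, coeff_expand, coeff_mk, coeff_one,
      hi.ne', if_false, sub_zero, Pi.one_apply, mul_ite, mul_one, mul_zero]
    rw [← sum_range_ite_succ_dvd_eq_sigma hi hiN, Nat.cast_sum]
    simp only [Nat.cast_ite, Nat.cast_zero]

theorem theta_euler : theta ℤ euler = -(sigmaSeries * euler) := by
  refine eq_of_forall_smodEq fun n => ?_
  have hσ : sigmaPartial n ≡ sigmaSeries [SMOD Ideal.span {X ^ (n + 1)}] :=
    smodEq_X_pow_iff.mpr fun i hi => by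
      rw [coeff_sigmaPartial (Nat.lt_succ_iff.mp hi), sigmaSeries, coeff_mk]
  calc theta ℤ euler ≡ theta ℤ (qPochhammer X n) [SMOD Ideal.span {X ^ (n + 1)}] :=
        theta_smodEq (euler_smodEq_qPochhammer n)
    _ = -(sigmaPartial n * qPochhammer X n) := theta_qPochhammer_X n
    _ ≡ -(sigmaSeries * euler) [SMOD Ideal.span {X ^ (n + 1)}] :=
        (hσ.mul (euler_smodEq_qPochhammer n).symm).neg

theorem theta_euler_pow_three : theta ℤ (euler ^ 3) = -(3 * sigmaSeries * euler ^ 3) := by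
  rw [Derivation.leibniz_pow, theta_euler]
  simp only [smul_eq_mul, nsmul_eq_mul]
  ring

theorem theta_theta_euler_pow_three :
    theta ℤ (theta ℤ (euler ^ 3)) =
      3 * (3 * sigmaSeries ^ 2 * euler ^ 3 - theta ℤ sigmaSeries * euler ^ 3) := by
  rw [theta_euler_pow_three, map_neg, Derivation.leibniz, Derivation.leibniz, theta_euler_pow_three]
  have h3 : theta ℤ (3 : ℤ⟦X⟧) = 0 := by exact_mod_cast Derivation.map_natCast (theta ℤ) 3
  simp only [smul_eq_mul, h3]
  ring

theorem cast_eq_of_three_mul_eq {i : ℕ} {x : ℤ} (hx : 3 * x = i * (i * jacobiCoeff i)) :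
    (x : ZMod 3) = -(if i % 9 = 1 then (jacobiCoeff (i / 9) : ZMod 3) else 0) := by
  by_cases hi : ∃ k, triangle k = i
  · obtain ⟨k, rfl⟩ := hi
    by_cases hk : k % 3 = 1
    · obtain ⟨r, rfl⟩ : ∃ r, k = 3 * r + 1 := ⟨k / 3, by omega⟩
      rw [jacobiCoeff_triangle, pow_succ, pow_mul] at hx
      rw [triangle_three_mul_add_one] at hx ⊢
      rw [if_pos (by omega), (by omega : (9 * triangle r + 1) / 9 = triangle r),
        jacobiCoeff_triangle]
      have hx' : x = -((9 * triangle r + 1) ^ 2 * (-1) ^ r * (2 * r + 1)) :=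
        mul_left_cancel₀ three_ne_zero (by rw [hx]; push_cast; ring)
      have h9 : (9 : ZMod 3) = 0 := by decide
      rw [hx']
      push_cast
      linear_combination (-(-1) ^ r * (2 * r + 1) * (9 * triangle r + 2) * triangle r : ZMod 3) * h9
    · obtain ⟨c, hc⟩ := three_dvd_triangle hk
      rw [if_neg (by omega), neg_zero, ZMod.intCast_zmod_eq_zero_iff_dvd]
      refine ⟨c * c * jacobiCoeff (triangle k), mul_left_cancel₀ three_ne_zero ?_⟩
      rw [hx, hc]
      push_cast
      ring
  · simp only [not_exists] at hi
    rw [jacobiCoeff_eq_zero hi, mul_zero, mul_zero, mul_eq_zero_iff_left three_ne_zero] at hx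
    rw [hx, Int.cast_zero, eq_comm, neg_eq_zero, ite_eq_right_iff]
    intro h
    rw [jacobiCoeff_eq_zero fun r hr => hi (3 * r + 1) (by rw [triangle_three_mul_add_one]; omega),
      Int.cast_zero]

theorem map_euler_pow_three_ne_zero : map (Int.castRingHom (ZMod 3)) (euler ^ 3) ≠ 0 := fun h => by
  have h0 := congrArg (coeff 0) h
  rw [coeff_map, coeff_euler_pow_three, show 0 = triangle 0 from rfl, jacobiCoeff_triangle] at h0
  simp at h0

theorem X_mul_expand_map_euler_pow_three :
    X * expand 9 (by norm_num) (map (Int.castRingHom (ZMod 3)) (euler ^ 3)) =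
      theta (ZMod 3) (map (Int.castRingHom (ZMod 3)) sigmaSeries) *
        map (Int.castRingHom (ZMod 3)) (euler ^ 3) := by
  set π := map (Int.castRingHom (ZMod 3))
  set c := 3 * sigmaSeries ^ 2 * euler ^ 3 - theta ℤ sigmaSeries * euler ^ 3
  have hc : π c = -(theta (ZMod 3) (π sigmaSeries) * π (euler ^ 3)) := by
    have h3 : π 3 = 0 := by
      rw [map_ofNat, ← map_ofNat (C : ZMod 3 →+* (ZMod 3)⟦X⟧),
        show (OfNat.ofNat 3 : ZMod 3) = 0 from rfl, map_zero]
    rw [map_sub, map_mul, map_mul, map_mul, h3, map_theta]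
    ring
  suffices X * expand 9 (by norm_num) (π (euler ^ 3)) = -π c by rw [this, hc, neg_neg]
  ext i
  have h : 3 * coeff i c = i * (i * jacobiCoeff i) := by
    have := congrArg (coeff i) theta_theta_euler_pow_three
    rw [coeff_theta, coeff_theta, coeff_euler_pow_three] at this
    rw [this]
    simpa using (coeff_natCast_mul 3 i c).symm
  rw [coeff_X_mul_expand (by norm_num), map_neg, coeff_map, coeff_map, eq_intCast, eq_intCast,
    cast_eq_of_three_mul_eq h, neg_neg, coeff_euler_pow_three]

theorem map_delta_eq_theta_sigmaSeries :
    map (Int.castRingHom (ZMod 3)) Δ =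
      theta (ZMod 3) (map (Int.castRingHom (ZMod 3)) sigmaSeries) := by
  have : Fact (Nat.Prime 3) := ⟨Nat.prime_three⟩
  have hfrob := pow_prime_pow_eq_expand 2 (map (Int.castRingHom (ZMod 3)) (euler ^ 3))
  simp only [Nat.reducePow] at hfrob
  apply mul_right_cancel₀ map_euler_pow_three_ne_zero
  rw [← X_mul_expand_map_euler_pow_three, ← hfrob, delta_eq_X_mul_euler_pow, map_mul, map_X,
    map_pow, map_pow]
  ring

theorem ramanujan_congruence_mod_three_general (n : ℕ) (h3 : ¬ (3 ∣ n)) :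
    (n : ℤ) * ramanujanTau n ≡ (ArithmeticFunction.sigma 1 n : ℤ) [ZMOD 3] := by
  have hτ := congrArg (coeff n) map_delta_eq_theta_sigmaSeries
  rw [coeff_map, coeff_theta, coeff_map, eq_intCast, eq_intCast, sigmaSeries, coeff_mk] at hτ
  have hn : (n : ZMod 3) ^ 2 = 1 :=
    ZMod.pow_card_sub_one_eq_one ((ZMod.natCast_eq_zero_iff n 3).not.mpr h3)
  refine (ZMod.intCast_eq_intCast_iff _ _ 3).mp ?_
  rw [Int.cast_mul, ramanujanTau, hτ, Int.cast_natCast, ← mul_assoc, ← sq, hn, one_mul]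

theorem ramanujan_congruence_mod_three (n : ℕ) (hn : 0 < n) (h3 : ¬ (3 ∣ n)) :
    (n : ℤ) * ramanujanTau n ≡ (ArithmeticFunction.sigma 1 n : ℤ) [ZMOD 3] :=
  ramanujan_congruence_mod_three_general n h3
end

section
/- Let m, n, d, e be positive integers with d² ∣ m and e² ∣ m·n. If either d does not divide e, or both m does not divide d·e and e does not divide d·n, then c_{m,n}(d,e) = 0, i.e. the group (ZMod e) × (ZMod (m·n/e)) has no subgroup isomorphic to (ZMod d) × (ZMod (m/d)). -/
/-!
Such a subgroup is an embedding of `ZMod d × ZMod (m/d)` into `ZMod e × ZMod (m·n/e)`, where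
`d ∣ m/d` and `e ∣ m·n/e`. Counting solutions of `d • x = 0` on both sides gives
`d² ≤ gcd(e, d) · gcd(m·n/e, d)`, which forces `d ∣ e`. Comparing exponents gives
`m/d ∣ m·n/e`, which amounts to `e ∣ d·n`.
-/

/-- `c_{m,n}(d,e)`: the number of subgroups of `ZMod e × ZMod (m·n/e)` that are
isomorphic (as groups, written additively) to `ZMod d × ZMod (m/d)`. -/
noncomputable def subgroupCount (m n d e : ℕ) : ℕ :=
  Nat.card {H : AddSubgroup (ZMod e × ZMod (m * n / e)) //
    Nonempty (H ≃+ ZMod d × ZMod (m / d))}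

section NsmulKernel

variable {A B : Type*} [AddCommGroup A] [AddCommGroup B]

theorem card_ker_nsmul_le_of_injective [Finite B] (k : ℕ) {f : A →+ B}
    (hf : Function.Injective f) :
    Nat.card (nsmulAddMonoidHom k : A →+ A).ker ≤ Nat.card (nsmulAddMonoidHom k : B →+ B).ker := by
  rw [← AddSubgroup.card_map_of_injective hf]
  refine AddSubgroup.card_le_of_le ?_
  rintro _ ⟨x, hx, rfl⟩
  simp_all [AddMonoidHom.mem_ker, ← map_nsmul]

theorem ker_nsmul_prod (k : ℕ) :
    (nsmulAddMonoidHom k : A × B →+ A × B).ker =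
      (nsmulAddMonoidHom k : A →+ A).ker.prod (nsmulAddMonoidHom k : B →+ B).ker := by
  ext x
  simp [AddMonoidHom.mem_ker, AddSubgroup.mem_prod, Prod.ext_iff]

theorem card_ker_nsmul_prod (k : ℕ) :
    Nat.card (nsmulAddMonoidHom k : A × B →+ A × B).ker =
      Nat.card (nsmulAddMonoidHom k : A →+ A).ker * Nat.card (nsmulAddMonoidHom k : B →+ B).ker := by
  rw [ker_nsmul_prod, Nat.card_congr (AddSubgroup.prodEquiv _ _).toEquiv, Nat.card_prod]

end NsmulKernel

namespace ZMod

variable {k l a b : ℕ}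

theorem card_ker_nsmul_prod [NeZero a] [NeZero b] (k : ℕ) :
    Nat.card (nsmulAddMonoidHom k : ZMod a × ZMod b →+ ZMod a × ZMod b).ker =
      a.gcd k * b.gcd k := by
  rw [_root_.card_ker_nsmul_prod, IsAddCyclic.card_nsmulAddMonoidHom_ker,
    IsAddCyclic.card_nsmulAddMonoidHom_ker, Nat.card_zmod, Nat.card_zmod]

theorem dvd_of_injective_prod [NeZero k] [NeZero l] [NeZero a] [NeZero b] (hkl : k ∣ l)
    {f : ZMod k × ZMod l →+ ZMod a × ZMod b} (hf : Function.Injective f) : k ∣ a ∧ k ∣ b := by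
  have hcard := card_ker_nsmul_le_of_injective k hf
  rw [card_ker_nsmul_prod, card_ker_nsmul_prod, Nat.gcd_self, Nat.gcd_eq_right hkl] at hcard
  have hk : 0 < k := Nat.pos_of_neZero k
  have ha : a.gcd k ≤ k := Nat.le_of_dvd hk (Nat.gcd_dvd_right a k)
  have hb : b.gcd k ≤ k := Nat.le_of_dvd hk (Nat.gcd_dvd_right b k)
  have ha' : a.gcd k = k := le_antisymm ha (by nlinarith)
  have hb' : b.gcd k = k := le_antisymm hb (by nlinarith)
  exact ⟨Nat.gcd_eq_right_iff_dvd.mp ha', Nat.gcd_eq_right_iff_dvd.mp hb'⟩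

theorem lcm_dvd_lcm_of_injective_prod {f : ZMod k × ZMod l →+ ZMod a × ZMod b}
    (hf : Function.Injective f) : Nat.lcm k l ∣ Nat.lcm a b := by
  have := AddMonoid.exponent_dvd_of_addMonoidHom f hf
  rwa [AddMonoid.exponent_prod, AddMonoid.exponent_prod, ZMod.exponent, ZMod.exponent,
    ZMod.exponent, ZMod.exponent] at this

end ZMod

theorem Nat.dvd_mul_of_div_dvd_div {m n d e : ℕ} (hm : 0 < m) (hdm : d ∣ m) (hem : e ∣ m * n)
    (h : m / d ∣ m * n / e) : e ∣ d * n := by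
  have : m * e ∣ m * (d * n) := by
    calc m * e = m / d * e * d := by rw [mul_right_comm, Nat.div_mul_cancel hdm]
      _ ∣ m * n / e * e * d := Nat.mul_dvd_mul_right (Nat.mul_dvd_mul_right h e) d
      _ = m * (d * n) := by rw [Nat.div_mul_cancel hem]; ring
  exact Nat.dvd_of_mul_dvd_mul_left hm this

theorem Nat.dvd_div_self_of_sq_dvd {d m : ℕ} (h : d ^ 2 ∣ m) : d ∣ m / d :=
  (Nat.dvd_div_iff_mul_dvd ((dvd_pow_self d two_ne_zero).trans h)).mpr (by rwa [← sq])

theorem subgroupCount_eq_zero (m n d e : ℕ) (hm : 0 < m) (hn : 0 < n)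
    (hd : 0 < d) (he : 0 < e) (hdm : d ^ 2 ∣ m) (hem : e ^ 2 ∣ m * n)
    (h : ¬ d ∣ e ∨ (¬ m ∣ d * e ∧ ¬ e ∣ d * n)) :
    subgroupCount m n d e = 0 := by
  have hdm' : d ∣ m := (dvd_pow_self d two_ne_zero).trans hdm
  have hem' : e ∣ m * n := (dvd_pow_self e two_ne_zero).trans hem
  have hdd := Nat.dvd_div_self_of_sq_dvd hdm
  have hee := Nat.dvd_div_self_of_sq_dvd hem
  have : NeZero d := ⟨hd.ne'⟩
  have : NeZero e := ⟨he.ne'⟩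
  have : NeZero (m / d) := ⟨(Nat.div_pos (Nat.le_of_dvd hm hdm') hd).ne'⟩
  have : NeZero (m * n / e) := ⟨(Nat.div_pos (Nat.le_of_dvd (by positivity) hem') he).ne'⟩
  rw [subgroupCount, Nat.card_eq_zero]
  refine .inl ⟨fun ⟨H, ⟨φ⟩⟩ => ?_⟩
  have hf : Function.Injective (H.subtype.comp φ.symm.toAddMonoidHom) :=
    H.subtype_injective.comp φ.symm.injective
  rcases h with hde | ⟨-, hedn⟩
  · exact hde (ZMod.dvd_of_injective_prod hdd hf).1
  · have := ZMod.lcm_dvd_lcm_of_injective_prod hf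
    rw [Nat.lcm_eq_right hdd, Nat.lcm_eq_right hee] at this
    exact hedn (Nat.dvd_mul_of_div_dvd_div hm hdm' hem' this)
end

section
/- Let n be a positive integer and let A be a subgroup of (ZMod n) × (ZMod n) with Nat.card A = n. Then there exists a unique positive integer d such that d² ∣ n and A is isomorphic as a group to (ZMod d) × (ZMod (n/d)). -/
/-!
The preimage of `A` in `ℤ × ℤ` is free of rank 2 and contains the kernel of `ℤ × ℤ → (ℤ/n)²`,
which has full rank, so Smith normal form gives `A ≃ ℤ/x × ℤ/y`, and `x * y = n` by counting.
Prime by prime, `{v_p x, v_p y} = {v_p (gcd x y), v_p (lcm x y)}`, so by the Chinese remainder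
theorem `A ≃ ℤ/d × ℤ/(n/d)` with `d = gcd x y`, and `d² ∣ x * y = n`. Conversely `d² ∣ n` means
`d ∣ n/d`, so `n/d` is the exponent of `ℤ/d × ℤ/(n/d)`, which therefore determines `d`.
-/

def RingEquiv.piProdEquivProdPi {ι : Type*} (R S : ι → Type*)
    [∀ i, NonUnitalNonAssocSemiring (R i)] [∀ i, NonUnitalNonAssocSemiring (S i)] :
    (Π i, R i × S i) ≃+* (Π i, R i) × (Π i, S i) :=
  { Equiv.arrowProdEquivProdArrow ι R S with
    map_add' := fun _ _ => rfl
    map_mul' := fun _ _ => rfl }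

namespace ZMod

noncomputable def equivPiOfPrimeFactorsSubset {m : ℕ} (hm : m ≠ 0) {s : Finset ℕ}
    (hs : m.primeFactors ⊆ s) (hp : ∀ p ∈ s, p.Prime) :
    ZMod m ≃+* Π p : s, ZMod ((p : ℕ) ^ m.factorization p) :=
  (ringEquivCongr <| by
    rw [Finset.prod_coe_sort s fun p => p ^ m.factorization p,
      ← Finsupp.prod_of_support_subset _ (Nat.support_factorization m ▸ hs) _ fun _ _ => pow_zero _,
      Nat.prod_factorization_pow_eq_self hm]).trans <|
  prodEquivPi _ fun p q hpq => Nat.Coprime.pow _ _ <|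
    (Nat.coprime_primes (hp p p.2) (hp q q.2)).mpr (Subtype.coe_injective.ne hpq)

def prodPowEquivMinMax (p α β : ℕ) :
    ZMod (p ^ α) × ZMod (p ^ β) ≃+* ZMod (p ^ min α β) × ZMod (p ^ max α β) :=
  if h : α ≤ β then
    (ringEquivCongr (by rw [min_eq_left h])).prodCongr (ringEquivCongr (by rw [max_eq_right h]))
  else
    RingEquiv.prodComm.trans <| (ringEquivCongr (by rw [min_eq_right (le_of_not_ge h)])).prodCongr
      (ringEquivCongr (by rw [max_eq_left (le_of_not_ge h)]))

noncomputable def prodEquivGcdLcm {x y : ℕ} (hx : x ≠ 0) (hy : y ≠ 0) :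
    ZMod x × ZMod y ≃+* ZMod (x.gcd y) × ZMod (x.lcm y) :=
  let s := (x * y).primeFactors
  have hp : ∀ p ∈ s, p.Prime := fun _ => Nat.prime_of_mem_primeFactors
  have hs {m : ℕ} (h : m ∣ x * y) : m.primeFactors ⊆ s :=
    Nat.primeFactors_mono h (mul_ne_zero hx hy)
  let crt {m : ℕ} (hm : m ≠ 0) (h : m ∣ x * y) := equivPiOfPrimeFactorsSubset hm (hs h) hp
  let perPrime (p : s) :
      ZMod ((p : ℕ) ^ x.factorization p) × ZMod ((p : ℕ) ^ y.factorization p) ≃+*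
        ZMod ((p : ℕ) ^ (x.gcd y).factorization p) × ZMod ((p : ℕ) ^ (x.lcm y).factorization p) :=
    (prodPowEquivMinMax _ _ _).trans <|
      (ringEquivCongr (by rw [Nat.factorization_gcd hx hy]; rfl)).prodCongr
        (ringEquivCongr (by rw [Nat.factorization_lcm hx hy]; rfl))
  (crt hx (dvd_mul_right x y)).prodCongr (crt hy (dvd_mul_left y x)) |>.trans <|
  (RingEquiv.piProdEquivProdPi _ _).symm.trans <| (RingEquiv.piCongrRight perPrime).trans <|
  (RingEquiv.piProdEquivProdPi _ _).trans <|
  (crt (Nat.gcd_ne_zero_left hx) ((Nat.gcd_dvd_left x y).trans (dvd_mul_right x y))).symm.prodCongr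
    (crt (Nat.lcm_ne_zero hx hy) (Nat.lcm_dvd (dvd_mul_right x y) (dvd_mul_left y x))).symm

theorem exponent_prod_of_dvd {a b : ℕ} (h : a ∣ b) :
    AddMonoid.exponent (ZMod a × ZMod b) = b := by
  rw [AddMonoid.exponent_prod, ZMod.exponent, ZMod.exponent]
  exact Nat.lcm_eq_right h

theorem eq_of_addEquiv_prod_div {n d e : ℕ} (hn : n ≠ 0) (hd : d ^ 2 ∣ n) (he : e ^ 2 ∣ n)
    (f : ZMod d × ZMod (n / d) ≃+ ZMod e × ZMod (n / e)) : d = e := by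
  have hdiv {c : ℕ} (hc : c ^ 2 ∣ n) : c ∣ n / c := Nat.dvd_div_of_mul_dvd (sq c ▸ hc)
  have h := AddMonoid.exponent_eq_of_addEquiv f
  rw [exponent_prod_of_dvd (hdiv hd), exponent_prod_of_dvd (hdiv he)] at h
  rw [← Nat.div_div_self ((dvd_pow_self d two_ne_zero).trans hd) hn, h,
    Nat.div_div_self ((dvd_pow_self e two_ne_zero).trans he) hn]

end ZMod

section FiniteQuotient

variable {M G : Type*} [AddCommGroup M] [Module.Free ℤ M] [Module.Finite ℤ M]
  [AddCommGroup G] [Finite G]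

theorem AddMonoidHom.finrank_ker_eq_of_surjective {f : M →+ G} (hf : Function.Surjective f) :
    Module.finrank ℤ (LinearMap.ker f.toIntLinearMap) = Module.finrank ℤ M :=
  (Submodule.finiteQuotient_iff _).mp
    (Finite.of_equiv G (f.toIntLinearMap.quotKerEquivOfSurjective hf).symm)

theorem AddCommGroup.exists_addEquiv_pi_zmod_of_surjective {k : ℕ}
    (hM : Module.finrank ℤ M = k) {f : M →+ G} (hf : Function.Surjective f) :
    ∃ a : Fin k → ℕ, Nonempty (G ≃+ Π i, ZMod (a i)) :=
  ⟨_, ⟨(f.toIntLinearMap.quotKerEquivOfSurjective hf).toAddEquiv.symm.trans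
    (Submodule.quotientEquivPiZMod _ (Module.finBasisOfFinrankEq ℤ M hM)
      (f.finrank_ker_eq_of_surjective hf))⟩⟩

theorem AddSubgroup.exists_addEquiv_pi_zmod_of_surjective {k : ℕ}
    (hM : Module.finrank ℤ M = k) {f : M →+ G} (hf : Function.Surjective f)
    (A : AddSubgroup G) : ∃ a : Fin k → ℕ, Nonempty (A ≃+ Π i, ZMod (a i)) := by
  let O := (A.comap f).toIntSubmodule
  have hker : LinearMap.ker f.toIntLinearMap ≤ O := fun m (hm : f m = 0) =>
    show f m ∈ A from hm ▸ A.zero_mem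
  have hO : Module.finrank ℤ O = k := le_antisymm (hM ▸ Submodule.finrank_le O)
    (hM ▸ f.finrank_ker_eq_of_surjective hf ▸ Submodule.finrank_mono hker)
  refine AddCommGroup.exists_addEquiv_pi_zmod_of_surjective hO
    (f := (f.comp O.subtype.toAddMonoidHom).codRestrict A fun m => m.2) ?_
  rintro ⟨g, hg⟩
  obtain ⟨m, rfl⟩ := hf g
  exact ⟨⟨m, hg⟩, rfl⟩

end FiniteQuotient

theorem ZMod.exists_addEquiv_prod_of_addSubgroup (n : ℕ) [NeZero n]
    (A : AddSubgroup (ZMod n × ZMod n)) : ∃ x y : ℕ, Nonempty (A ≃+ ZMod x × ZMod y) := by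
  obtain ⟨a, ⟨e⟩⟩ := A.exists_addEquiv_pi_zmod_of_surjective (M := ℤ × ℤ) (k := 2) (by simp)
    (f := (Int.castAddHom (ZMod n)).prodMap (Int.castAddHom (ZMod n)))
    (ZMod.intCast_surjective.prodMap ZMod.intCast_surjective)
  exact ⟨a 0, a 1, ⟨e.trans (RingEquiv.piFinTwo _).toAddEquiv⟩⟩

theorem exists_unique_type_of_subgroup (n : ℕ) (hn : 0 < n)
    (A : AddSubgroup (ZMod n × ZMod n)) (hA : Nat.card A = n) :
    ∃! d : ℕ, 0 < d ∧ d ^ 2 ∣ n ∧ Nonempty (A ≃+ ZMod d × ZMod (n / d)) := by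
  have : NeZero n := ⟨hn.ne'⟩
  obtain ⟨x, y, ⟨e⟩⟩ := ZMod.exists_addEquiv_prod_of_addSubgroup n A
  obtain rfl : x * y = n := by
    rw [← hA, Nat.card_congr e.toEquiv, Nat.card_prod, Nat.card_zmod, Nat.card_zmod]
  have hx : x ≠ 0 := left_ne_zero_of_mul hn.ne'
  have hy : y ≠ 0 := right_ne_zero_of_mul hn.ne'
  have hd0 : 0 < x.gcd y := Nat.gcd_pos_of_pos_left y (Nat.pos_of_ne_zero hx)
  have hd : x.gcd y ^ 2 ∣ x * y :=
    sq (x.gcd y) ▸ mul_dvd_mul (x.gcd_dvd_left y) (x.gcd_dvd_right y)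
  have hlcm : x.lcm y = x * y / x.gcd y := by
    rw [← Nat.gcd_mul_lcm, Nat.mul_div_cancel_left _ hd0]
  let E : A ≃+ ZMod (x.gcd y) × ZMod (x * y / x.gcd y) := e.trans <|
    (ZMod.prodEquivGcdLcm hx hy).toAddEquiv.trans <|
      (AddEquiv.refl _).prodCongr (ZMod.ringEquivCongr hlcm).toAddEquiv
  refine ⟨x.gcd y, ⟨hd0, hd, ⟨E⟩⟩, ?_⟩
  rintro d ⟨-, hd', ⟨f⟩⟩
  exact (ZMod.eq_of_addEquiv_prod_div hn.ne' hd hd' (E.symm.trans f)).symm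
end

section
/- Let n be a positive odd integer. Then σ(n) is not divisible by 4 if and only if at most one prime factor of n has odd exponent in the prime factorization of n, and such a prime ℓ with exponent e = ν_ℓ(n) satisfies ℓ ≡ 1 (mod 4) and e ≡ 1 (mod 4). -/
lemma three_pow_mod4 (k : ℕ) : 3 ^ k % 4 = if k % 2 = 0 then 1 else 3 := by
  induction k with
  | zero => simp
  | succ k ih => rw [pow_succ, Nat.mul_mod, ih]; split_ifs <;> simp_all <;> omega

lemma geom_mod4 (p e : ℕ) (hp : p % 2 = 1) :
    (∑ i ∈ Finset.range (e+1), p ^ i) % 4 =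
      if p % 4 = 1 then (e+1) % 4 else (e+1) % 2 := by
  have hp4 : p % 4 = 1 ∨ p % 4 = 3 := by omega
  induction e with
  | zero => split_ifs <;> simp
  | succ e ih =>
      rw [Finset.sum_range_succ, Nat.add_mod, ih, Nat.pow_mod]
      rcases hp4 with h | h
      · rw [h]; simp
      · rw [h]; simp only [if_neg (by omega : ¬(3:ℕ) = 1), three_pow_mod4]
        split_ifs <;> omega

lemma geom_dvd (p e : ℕ) (hp : p % 2 = 1) :
    (2 ∣ (∑ i ∈ Finset.range (e+1), p ^ i) ↔ e % 2 = 1) ∧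
    (4 ∣ (∑ i ∈ Finset.range (e+1), p ^ i) ↔
      (e % 2 = 1 ∧ ¬(p % 4 = 1 ∧ e % 4 = 1))) := by
  have h := geom_mod4 p e hp
  split_ifs at h <;> constructor <;> omega

theorem sigma_not_dvd_four_iff (n : ℕ) (hn : 0 < n) (hodd : Odd n) :
    ¬ (4 ∣ ArithmeticFunction.sigma 1 n) ↔
      ((∀ p q : ℕ, p.Prime → q.Prime → p ∣ n → q ∣ n →
        Odd (n.factorization p) → Odd (n.factorization q) → p = q) ∧
      (∀ ℓ : ℕ, ℓ.Prime → ℓ ∣ n → Odd (n.factorization ℓ) →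
        ℓ % 4 = 1 ∧ n.factorization ℓ % 4 = 1)) := by
  classical
  have hne : n ≠ 0 := hn.ne'
  set S := n.primeFactors with hS
  set e : ℕ → ℕ := fun p => n.factorization p with he
  set g : ℕ → ℕ := fun p => ∑ i ∈ Finset.range (e p + 1), p ^ i with hg
  have hodd2 : ∀ p ∈ S, p % 2 = 1 := by
    intro p hpS
    have hp := Nat.prime_of_mem_primeFactors hpS
    rcases hp.eq_two_or_odd with h2 | h1
    · exfalso
      have : 2 ∣ n := h2 ▸ Nat.dvd_of_mem_primeFactors hpS
      rw [Nat.odd_iff] at hodd; omega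
    · exact h1
  have hgpos : ∀ p ∈ S, g p ≠ 0 := by
    intro p hpS
    have hp := Nat.prime_of_mem_primeFactors hpS
    have : 0 < g p :=
      Finset.sum_pos (fun i _ => pow_pos hp.pos i) ⟨0, by simp⟩
    omega
  have hσ : ArithmeticFunction.sigma 1 n = ∏ p ∈ S, g p := by
    rw [ArithmeticFunction.sigma_one_apply, Nat.sum_divisors hne]
  have hσne : ArithmeticFunction.sigma 1 n ≠ 0 := by
    rw [hσ]; exact Finset.prod_ne_zero_iff.mpr hgpos
  set v : ℕ → ℕ := fun p => (g p).factorization 2 with hv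
  have hfact : (ArithmeticFunction.sigma 1 n).factorization 2 = ∑ p ∈ S, v p := by
    rw [hσ, Nat.factorization_prod hgpos]
    simp [Finset.sum_apply', hv]
  have hv1 : ∀ p ∈ S, (1 ≤ v p ↔ e p % 2 = 1) := by
    intro p hpS
    rw [hv, ← Nat.Prime.pow_dvd_iff_le_factorization Nat.prime_two (hgpos p hpS),
      pow_one]
    exact (geom_dvd p (e p) (hodd2 p hpS)).1
  have hv2 : ∀ p ∈ S, (2 ≤ v p ↔ (e p % 2 = 1 ∧ ¬(p % 4 = 1 ∧ e p % 4 = 1))) := by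
    intro p hpS
    rw [hv, ← Nat.Prime.pow_dvd_iff_le_factorization Nat.prime_two (hgpos p hpS),
      show (2:ℕ)^2 = 4 by norm_num]
    exact (geom_dvd p (e p) (hodd2 p hpS)).2
  have key : ¬ (4 ∣ ArithmeticFunction.sigma 1 n) ↔ ∑ p ∈ S, v p ≤ 1 := by
    rw [show (4:ℕ) = 2 ^ 2 by norm_num,
      Nat.Prime.pow_dvd_iff_le_factorization Nat.prime_two hσne, hfact]
    omega
  rw [key]
  constructor
  · intro hsum
    constructor
    · intro p q hp hq hpn hqn hop hoq
      by_contra hne'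
      have hpS : p ∈ S := Nat.mem_primeFactors.mpr ⟨hp, hpn, hne⟩
      have hqS : q ∈ S := Nat.mem_primeFactors.mpr ⟨hq, hqn, hne⟩
      have hsub : v p + v q ≤ ∑ r ∈ S, v r := by
        rw [← Finset.sum_pair hne']
        exact Finset.sum_le_sum_of_subset (by
          intro x hx; simp only [Finset.mem_insert, Finset.mem_singleton] at hx
          rcases hx with rfl | rfl <;> assumption)
      have h1 := (hv1 p hpS).mpr (Nat.odd_iff.mp hop)
      have h2 := (hv1 q hqS).mpr (Nat.odd_iff.mp hoq)
      omega
    · intro ℓ hℓ hℓn hoℓ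
      have hℓS : ℓ ∈ S := Nat.mem_primeFactors.mpr ⟨hℓ, hℓn, hne⟩
      have hle : v ℓ ≤ ∑ r ∈ S, v r :=
        Finset.single_le_sum (fun _ _ => Nat.zero_le _) hℓS
      have h1 := (hv1 ℓ hℓS).mpr (Nat.odd_iff.mp hoℓ)
      have h2 : ¬ 2 ≤ v ℓ := by omega
      rw [hv2 ℓ hℓS] at h2
      push_neg at h2
      exact h2 (Nat.odd_iff.mp hoℓ)
  · rintro ⟨huniq, hgood⟩
    by_cases hex : ∃ ℓ ∈ S, e ℓ % 2 = 1
    · obtain ⟨ℓ, hℓS, hℓo⟩ := hex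
      have hℓp := Nat.prime_of_mem_primeFactors hℓS
      have hℓd := Nat.dvd_of_mem_primeFactors hℓS
      have hsum_eq : ∑ p ∈ S, v p = v ℓ := by
        refine Finset.sum_eq_single_of_mem ℓ hℓS (fun q hqS hqne => ?_)
        by_contra h0
        have h1 : 1 ≤ v q := Nat.one_le_iff_ne_zero.mpr h0
        have hqo := (hv1 q hqS).mp h1
        exact hqne (huniq q ℓ (Nat.prime_of_mem_primeFactors hqS) hℓp
          (Nat.dvd_of_mem_primeFactors hqS) hℓd
          (Nat.odd_iff.mpr hqo) (Nat.odd_iff.mpr hℓo))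
      rw [hsum_eq]
      have hgℓ := hgood ℓ hℓp hℓd (Nat.odd_iff.mpr hℓo)
      have h2 : ¬ 2 ≤ v ℓ := by
        rw [hv2 ℓ hℓS]; push_neg; intro _; exact hgℓ
      omega
    · push_neg at hex
      have hz : ∑ p ∈ S, v p = 0 := by
        refine Finset.sum_eq_zero (fun p hpS => ?_)
        by_contra h0
        exact hex p hpS ((hv1 p hpS).mp (Nat.one_le_iff_ne_zero.mpr h0))
      omega
end
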